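/- Under the stated assumptions on (r_n), one has sup_{x ∈ B_1} | [∫_{‖x−y‖_p ≤ r_n} g(‖x−y‖_p/r_n) ρ(y) dy] / (m_0 r_n^d ρ(x)) − 1 | → 0 as n → ∞; that is, ∫_{‖x−y‖_p ≤ r_n} g(‖x−y‖_p/r_n) ρ(y) dy = m_0 r_n^d ρ(x)(1 + o(1)) uniformly for x ∈ B_1. -/

import Mathlib

open MeasureTheory ProbabilityTheory Filter
open scoped ENNReal NNReal BigOperators

/-- The ℓ^p norm on `ℝ^d`, for `p ∈ [1,∞]` (encoded as `p : ℝ≥0∞`). -/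
noncomputable def lpNormR {d : ℕ} (p : ℝ≥0∞) (x : Fin d → ℝ) : ℝ :=
  if p = ∞ then ⨆ i, |x i| else (∑ i, |x i| ^ p.toReal) ^ (1 / p.toReal)

/-- The Gaussian weight `ρ(x) = exp(-∑ x_i²/(2σ_i²))`. -/
noncomputable def gaussWeight {d : ℕ} (σ : Fin d → ℝ) (x : Fin d → ℝ) : ℝ :=
  Real.exp (-(∑ i, x i ^ 2 / (2 * σ i ^ 2)))

/-- The product Gaussian measure `N_d(0, diag(σ_1²,…,σ_d²))` on `ℝ^d`. -/
noncomputable def gaussPi (d : ℕ) (σ : Fin d → ℝ) : Measure (Fin d → ℝ) :=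
  Measure.pi fun i => gaussianReal 0 (Real.toNNReal (σ i ^ 2))

/-- The moment constant `m_l = ∫_{ℝ^d} |u_1|^l 1(‖u‖_p ≤ 1) g(‖u‖_p) du`. -/
noncomputable def mmt (d : ℕ) (hd : 0 < d) (p : ℝ≥0∞) (g : ℝ → ℝ) (l : ℕ) : ℝ :=
  ∫ u : Fin d → ℝ,
    if lpNormR p u ≤ 1 then |u ⟨0, hd⟩| ^ l * g (lpNormR p u) else 0

/-- The affinity matrix `K(i,j) = 1(‖x_i-x_j‖_p ≤ r) g(‖x_i-x_j‖_p/r)`. -/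
noncomputable def affK {d n : ℕ} (p : ℝ≥0∞) (g : ℝ → ℝ) (r : ℝ)
    (x : Fin n → Fin d → ℝ) : Matrix (Fin n) (Fin n) ℝ :=
  Matrix.of fun i j =>
    if lpNormR p (x i - x j) ≤ r then g (lpNormR p (x i - x j) / r) else 0

/-- The scaled random-walk Laplacian `L = (2m_0/(m_2 r²)) (I - D⁻¹K)`. -/
noncomputable def lapL {d n : ℕ} (hd : 0 < d) (p : ℝ≥0∞) (g : ℝ → ℝ) (r : ℝ)
    (x : Fin n → Fin d → ℝ) : Matrix (Fin n) (Fin n) ℝ :=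
  (2 * mmt d hd p g 0 / (mmt d hd p g 2 * r ^ 2)) •
    (1 - Matrix.of fun i j => affK p g r x i j / ∑ l, affK p g r x i l)

/-- The eigenvalues of a matrix (real roots of the characteristic polynomial,
with multiplicity), sorted in non-decreasing order. -/
noncomputable def sortedEigs {n : ℕ} (A : Matrix (Fin n) (Fin n) ℝ) : List ℝ :=
  Multiset.sort (Matrix.charpoly A).roots (· ≤ ·)

/-- The number of eigenvalues (real roots of the characteristic polynomial, with
multiplicity) that are `≤ δ`. -/
noncomputable def eigCountLE {n : ℕ} (A : Matrix (Fin n) (Fin n) ℝ) (δ : ℝ) : ℕ :=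
  Multiset.card (Multiset.filter (fun t => t ≤ δ) (Matrix.charpoly A).roots)

/-- The `m`-th physicist's Hermite polynomial `H_m(x) = (-1)^m e^{x²} (d/dx)^m e^{-x²}`. -/
noncomputable def physHermite (m : ℕ) (x : ℝ) : ℝ :=
  (-1 : ℝ) ^ m * Real.exp (x ^ 2) * iteratedDeriv m (fun t => Real.exp (-t ^ 2)) x

/-- The sigmoid function `s(t) = (1+e^{-t})⁻¹`. -/
noncomputable def sigmoid (t : ℝ) : ℝ := (1 + Real.exp (-t))⁻¹

/-- The smoothed affinity matrix `K̃(i,j) = s(α(r²-‖x_i-x_j‖_p²)) g*(‖x_i-x_j‖_p/r)`. -/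
noncomputable def affKs {d n : ℕ} (p : ℝ≥0∞) (gs : ℝ → ℝ) (α r : ℝ)
    (x : Fin n → Fin d → ℝ) : Matrix (Fin n) (Fin n) ℝ :=
  Matrix.of fun i j =>
    sigmoid (α * (r ^ 2 - lpNormR p (x i - x j) ^ 2)) * gs (lpNormR p (x i - x j) / r)

/-- The smoothed scaled random-walk Laplacian `L̃ = (2m_0/(m_2 r²)) (I - D̃⁻¹K̃)`. -/
noncomputable def lapLs {d n : ℕ} (hd : 0 < d) (p : ℝ≥0∞) (g gs : ℝ → ℝ) (α r : ℝ)
    (x : Fin n → Fin d → ℝ) : Matrix (Fin n) (Fin n) ℝ :=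
  (2 * mmt d hd p g 0 / (mmt d hd p g 2 * r ^ 2)) •
    (1 - Matrix.of fun i j => affKs p gs α r x i j / ∑ l, affKs p gs α r x i l)

/-- The ℓ²→ℓ² operator norm of a real square matrix. -/
noncomputable def matOpNorm {n : ℕ} (A : Matrix (Fin n) (Fin n) ℝ) : ℝ :=
  ‖Matrix.toEuclideanCLM (𝕜 := ℝ) A‖

/-- The weighted L² norm `‖f‖_F = (∫ f(x)² ρ(x)² dx)^{1/2}`. -/
noncomputable def Fnorm {d : ℕ} (σ : Fin d → ℝ) (f : (Fin d → ℝ) → ℝ) : ℝ :=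
  (∫ x : Fin d → ℝ, f x ^ 2 * gaussWeight σ x ^ 2) ^ ((1 : ℝ) / 2)

/-- Partial derivative `∂f/∂x_i`. -/
noncomputable def pd {d : ℕ} (i : Fin d) (f : (Fin d → ℝ) → ℝ) : (Fin d → ℝ) → ℝ :=
  fun x => fderiv ℝ f x (Pi.single i 1)

/-- The weighted Laplace–Beltrami operator
`Δ_ρ f(x) = -∑ ∂²f/∂x_i²(x) + ∑ (2x_i/σ_i²) ∂f/∂x_i(x)`. -/
noncomputable def deltaRho {d : ℕ} (σ : Fin d → ℝ) (f : (Fin d → ℝ) → ℝ) :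
    (Fin d → ℝ) → ℝ :=
  fun x => -(∑ i, pd i (pd i f) x) + ∑ i, (2 * x i / σ i ^ 2) * pd i f x

/-- The deterministic integral operator `T_r` (Tn). -/
noncomputable def Tn {d : ℕ} (hd : 0 < d) (p : ℝ≥0∞) (σ : Fin d → ℝ) (g : ℝ → ℝ)
    (r : ℝ) (f : (Fin d → ℝ) → ℝ) (x : Fin d → ℝ) : ℝ :=
  (2 / (r ^ (d + 2) * mmt d hd p g 2 * gaussWeight σ x)) *
    ∫ y : Fin d → ℝ,
      if lpNormR p (x - y) ≤ r then
        g (lpNormR p (x - y) / r) * (f x - f y) * gaussWeight σ y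
      else 0

/-- The intermediate operator `T̃_r`. -/
noncomputable def TtildeOp {d : ℕ} (hd : 0 < d) (p : ℝ≥0∞) (σ : Fin d → ℝ)
    (g : ℝ → ℝ) (r : ℝ) (f : (Fin d → ℝ) → ℝ) (x : Fin d → ℝ) : ℝ :=
  (2 * mmt d hd p g 0 / (mmt d hd p g 2 * r ^ 2)) *
    (∫ y : Fin d → ℝ,
      if lpNormR p (x - y) ≤ r then
        g (lpNormR p (x - y) / r) * (f x - f y) * gaussWeight σ y
      else 0) /
    (∫ y : Fin d → ℝ,
      if lpNormR p (x - y) ≤ r then g (lpNormR p (x - y) / r) * gaussWeight σ y else 0)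

/-- The empirical operator `L̃_n`. -/
noncomputable def empOp {d n : ℕ} (hd : 0 < d) (p : ℝ≥0∞) (g gs : ℝ → ℝ) (α r : ℝ)
    (x : Fin n → Fin d → ℝ) (f : (Fin d → ℝ) → ℝ) (y : Fin d → ℝ) : ℝ :=
  (2 * mmt d hd p g 0 / (mmt d hd p g 2 * r ^ 2)) *
    (∑ j, sigmoid (α * (r ^ 2 - lpNormR p (y - x j) ^ 2)) *
        gs (lpNormR p (y - x j) / r) * (f y - f (x j))) /
    (∑ j, sigmoid (α * (r ^ 2 - lpNormR p (y - x j) ^ 2)) *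
        gs (lpNormR p (y - x j) / r))

/-! Substituting `y = x - r u` turns the integral into `r^d ∫ 1(‖u‖_p ≤ 1) g(‖u‖_p) ρ(x - r u) du`.
On `B_1` we have `|x_i| ≤ σ_i √(2(1+β) log n)`, so for `‖u‖_p ≤ 1` the ratio `ρ(x - r u)/ρ(x)` is the
exponential of a quantity of order `r_n √(log n) + r_n²`, which tends to zero since `r_n n^ε → 0`.
Hence `ρ(x - r u) = ρ(x)(1 + o(1))` uniformly on `B_1`, and integrating against the kernel, whose
integral is `m_0 > 0`, gives `m_0 r^d ρ(x)(1 + o(1))`. -/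

open scoped Topology

section LpNorm

variable {d : ℕ} {p : ℝ≥0∞}

theorem lpNormR_eq_norm [Fact (1 ≤ p)] (x : Fin d → ℝ) :
    lpNormR p x = ‖WithLp.toLp p x‖ := by
  unfold lpNormR
  split_ifs with hp
  · subst hp; rfl
  · rw [PiLp.norm_eq_sum (ENNReal.toReal_pos (zero_lt_one.trans_le Fact.out).ne' hp)]
    rfl

variable [Fact (1 ≤ p)]

theorem lpNormR_nonneg (x : Fin d → ℝ) : 0 ≤ lpNormR p x := by
  rw [lpNormR_eq_norm]; exact norm_nonneg _

theorem continuous_lpNormR : Continuous (lpNormR (d := d) p) := by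
  simp_rw [funext lpNormR_eq_norm]
  exact continuous_norm.comp (PiLp.continuous_toLp _ _)

theorem lpNormR_smul {c : ℝ} (hc : 0 ≤ c) (x : Fin d → ℝ) :
    lpNormR p (c • x) = c * lpNormR p x := by
  rw [lpNormR_eq_norm, lpNormR_eq_norm, WithLp.toLp_smul, norm_smul, Real.norm_of_nonneg hc]

theorem norm_le_lpNormR (x : Fin d → ℝ) : ‖x‖ ≤ lpNormR p x :=
  (pi_norm_le_iff_of_nonneg (lpNormR_nonneg x)).2 fun i => by
    rw [lpNormR_eq_norm]; exact PiLp.norm_apply_le (WithLp.toLp p x) i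

theorem lpNormR_zero : lpNormR p (0 : Fin d → ℝ) = 0 := by
  rw [lpNormR_eq_norm, WithLp.toLp_zero, norm_zero]

end LpNorm

theorem integral_ite_comp_sub_eq_pow_mul {E : Type*} [NormedAddCommGroup E] [NormedSpace ℝ E]
    [FiniteDimensional ℝ E] [MeasurableSpace E] [BorelSpace E] (μ : Measure E)
    [μ.IsAddHaarMeasure] (N : E → ℝ) {R : ℝ} (hR : 0 < R) (hN : ∀ u, N (R • u) = R * N u)
    (K : ℝ → ℝ) (f : E → ℝ) (x : E) :
    ∫ y, (if N (x - y) ≤ R then K (N (x - y) / R) * f y else 0) ∂μ =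
      R ^ Module.finrank ℝ E *
        ∫ u, (if N u ≤ 1 then K (N u) else 0) * f (x - R • u) ∂μ := by
  set F : E → ℝ := fun z => if N z ≤ R then K (N z / R) * f (x - z) else 0
  calc ∫ y, (if N (x - y) ≤ R then K (N (x - y) / R) * f y else 0) ∂μ
      = ∫ y, F (x - y) ∂μ := by simp only [F, sub_sub_cancel]
    _ = ∫ z, F z ∂μ := integral_sub_left_eq_self F μ x
    _ = R ^ Module.finrank ℝ E * ∫ u, F (R • u) ∂μ := by
      rw [Measure.integral_comp_smul_of_nonneg μ F R (hR := hR.le), smul_eq_mul,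
        mul_inv_cancel_left₀ (pow_pos hR _).ne']
    _ = _ := by
      congr 1
      refine integral_congr_ae (Eventually.of_forall fun u => ?_)
      simp only [F, hN, mul_le_iff_le_one_right hR, mul_div_cancel_left₀ _ hR.ne', ite_mul,
        zero_mul]

theorem abs_integral_mul_sub_le {α : Type*} [MeasurableSpace α] {μ : Measure α}
    {G f : α → ℝ} {a δ : ℝ} (hG : Integrable G μ)
    (hGf : Integrable (fun u => G u * f u) μ) (hG_nonneg : ∀ u, 0 ≤ G u)
    (hf : ∀ u, G u ≠ 0 → |f u - a| ≤ δ) :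
    |∫ u, G u * f u ∂μ - (∫ u, G u ∂μ) * a| ≤ δ * ∫ u, G u ∂μ := by
  have hpt : ∀ u, |G u * f u - G u * a| ≤ δ * G u := fun u => by
    rw [← mul_sub, abs_mul, abs_of_nonneg (hG_nonneg u), mul_comm δ]
    rcases eq_or_ne (G u) 0 with h | h
    · simp [h]
    · exact mul_le_mul_of_nonneg_left (hf u h) (hG_nonneg u)
  rw [← integral_mul_const, ← integral_sub hGf (hG.mul_const a), ← integral_const_mul]
  exact (abs_integral_le_integral_abs).trans
    (integral_mono (hGf.sub (hG.mul_const a)).abs (hG.const_mul δ) hpt)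

section UnitBallKernel

variable {d : ℕ} {p : ℝ≥0∞} {g : ℝ → ℝ}

noncomputable def unitBallKernel (p : ℝ≥0∞) (g : ℝ → ℝ) (u : Fin d → ℝ) : ℝ :=
  if lpNormR p u ≤ 1 then g (lpNormR p u) else 0

theorem mmt_zero_eq_integral_unitBallKernel (hd : 0 < d) :
    mmt d hd p g 0 = ∫ u : Fin d → ℝ, unitBallKernel p g u := by
  simp only [mmt, unitBallKernel, pow_zero, one_mul]

theorem lpNormR_le_one_of_unitBallKernel_ne_zero {u : Fin d → ℝ}
    (hu : unitBallKernel p g u ≠ 0) : lpNormR p u ≤ 1 := by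
  by_contra h
  exact hu (if_neg h)

theorem unitBallKernel_eq_indicator :
    unitBallKernel (d := d) p g = {u | lpNormR p u ≤ 1}.indicator (g ∘ lpNormR p) :=
  rfl

variable [Fact (1 ≤ p)]

theorem isCompact_lpNormR_le_one : IsCompact {u : Fin d → ℝ | lpNormR p u ≤ 1} :=
  Metric.isCompact_of_isClosed_isBounded (isClosed_le continuous_lpNormR continuous_const)
    ((Metric.isBounded_closedBall (x := (0 : Fin d → ℝ)) (r := 1)).subset fun u hu => by
      simpa using (norm_le_lpNormR u).trans hu)

theorem integrable_unitBallKernel (hg : ContinuousOn g (Set.Ici 0)) :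
    Integrable (unitBallKernel (d := d) p g) := by
  have hcont : Continuous (g ∘ lpNormR (d := d) p) :=
    hg.comp_continuous continuous_lpNormR fun u => lpNormR_nonneg u
  rw [unitBallKernel_eq_indicator, integrable_indicator_iff
    isCompact_lpNormR_le_one.isClosed.measurableSet]
  exact hcont.continuousOn.integrableOn_compact isCompact_lpNormR_le_one

theorem unitBallKernel_nonneg (hg : ∀ t ∈ Set.Icc (0 : ℝ) 1, 0 ≤ g t) (u : Fin d → ℝ) :
    0 ≤ unitBallKernel p g u := by
  unfold unitBallKernel
  split_ifs with h
  exacts [hg _ ⟨lpNormR_nonneg u, h⟩, le_rfl]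

theorem integral_unitBallKernel_pos (hg : ContinuousOn g (Set.Ici 0))
    (hg_pos : ∀ t ∈ Set.Icc (0 : ℝ) 1, 0 < g t) :
    0 < ∫ u : Fin d → ℝ, unitBallKernel p g u := by
  rw [integral_pos_iff_support_of_nonneg
    (unitBallKernel_nonneg fun t ht => (hg_pos t ht).le) (integrable_unitBallKernel hg)]
  have hball : {u : Fin d → ℝ | lpNormR p u < 1} ⊆ Function.support (unitBallKernel p g) :=
    fun u hu => by
      have hu : lpNormR p u ≤ 1 := le_of_lt hu
      simpa [unitBallKernel, hu] using (hg_pos _ ⟨lpNormR_nonneg u, hu⟩).ne'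
  refine lt_of_lt_of_le ?_ (measure_mono hball)
  exact (isOpen_lt continuous_lpNormR continuous_const).measure_pos volume
    ⟨0, by simp [lpNormR_zero]⟩

end UnitBallKernel

section GaussWeight

variable {d : ℕ} {σ : Fin d → ℝ}

theorem gaussWeight_pos (σ x : Fin d → ℝ) : 0 < gaussWeight σ x := Real.exp_pos _

theorem gaussWeight_le_one (σ x : Fin d → ℝ) : gaussWeight σ x ≤ 1 := by
  rw [gaussWeight, Real.exp_le_one_iff, neg_nonpos]
  exact Finset.sum_nonneg fun i _ => by positivity

theorem continuous_gaussWeight (σ : Fin d → ℝ) : Continuous (gaussWeight σ) := by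
  unfold gaussWeight
  fun_prop

theorem gaussWeight_sub (hσ : ∀ i, σ i ≠ 0) (x v : Fin d → ℝ) :
    gaussWeight σ (x - v) =
      gaussWeight σ x * Real.exp (∑ i, (2 * x i * v i - v i ^ 2) / (2 * σ i ^ 2)) := by
  rw [gaussWeight, gaussWeight, ← Real.exp_add, neg_add_eq_sub, ← Finset.sum_sub_distrib,
    ← Finset.sum_neg_distrib]
  congr 1
  refine Finset.sum_congr rfl fun i _ => ?_
  have := hσ i
  simp only [Pi.sub_apply]
  field_simp
  ring

theorem abs_exp_sub_one_le_exp_abs_sub_one (t : ℝ) : |Real.exp t - 1| ≤ Real.exp |t| - 1 := by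
  rcases le_or_gt 0 t with ht | ht
  · rw [abs_of_nonneg ht, abs_of_nonneg (by linarith [Real.one_le_exp ht])]
  · rw [abs_of_neg ht, abs_of_nonpos (by linarith [Real.exp_lt_one_iff.mpr ht])]
    linarith [Real.add_one_le_exp t, Real.add_one_le_exp (-t)]

theorem MeasureTheory.Integrable.mul_gaussWeight_comp {α : Type*} [MeasurableSpace α]
    {μ : Measure α} {G : α → ℝ} {φ : α → Fin d → ℝ} (hG : Integrable G μ) (hφ : Measurable φ) :
    Integrable (fun u => G u * gaussWeight σ (φ u)) μ :=
  hG.mul_bdd ((continuous_gaussWeight σ).measurable.comp hφ).aestronglyMeasurable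
    (ae_of_all _ fun u => by
      rw [Real.norm_of_nonneg (gaussWeight_pos σ _).le]; exact gaussWeight_le_one σ _)

/-- Bound on `|log (ρ(x - v) / ρ(x))|` when `|x_i| ≤ σ_i M` and `‖v‖_∞ ≤ R`. -/
noncomputable def gaussShiftBound (σ : Fin d → ℝ) (M R : ℝ) : ℝ :=
  ∑ i, (2 * σ i * M * R + R ^ 2) / (2 * σ i ^ 2)

theorem abs_gaussWeight_sub_sub_le (hσ : ∀ i, 0 < σ i) {x v : Fin d → ℝ} {M R : ℝ}
    (hx : ∀ i, |x i| ≤ σ i * M) (hv : ‖v‖ ≤ R) :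
    |gaussWeight σ (x - v) - gaussWeight σ x| ≤
      (Real.exp (gaussShiftBound σ M R) - 1) * gaussWeight σ x := by
  have hterm : ∀ i, |(2 * x i * v i - v i ^ 2) / (2 * σ i ^ 2)| ≤
      (2 * σ i * M * R + R ^ 2) / (2 * σ i ^ 2) := fun i => by
    have hvi : |v i| ≤ R := (norm_le_pi_norm v i).trans hv
    have hσi : 0 < 2 * σ i ^ 2 := mul_pos two_pos (pow_pos (hσ i) 2)
    rw [abs_div, abs_of_pos hσi]
    refine div_le_div_of_nonneg_right ?_ hσi.le
    calc |2 * x i * v i - v i ^ 2| ≤ |2 * x i * v i| + |v i ^ 2| := abs_sub _ _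
      _ = 2 * |x i| * |v i| + |v i| ^ 2 := by rw [abs_mul, abs_mul, abs_two, abs_pow]
      _ ≤ 2 * σ i * M * R + R ^ 2 := by
          nlinarith [abs_nonneg (x i), abs_nonneg (v i), hx i]
  have hsum : |∑ i, (2 * x i * v i - v i ^ 2) / (2 * σ i ^ 2)| ≤ gaussShiftBound σ M R :=
    (Finset.abs_sum_le_sum_abs _ _).trans (Finset.sum_le_sum fun i _ => hterm i)
  rw [gaussWeight_sub (fun i => (hσ i).ne'), ← mul_sub_one, abs_mul,
    abs_of_pos (gaussWeight_pos σ x), mul_comm]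
  exact mul_le_mul_of_nonneg_right ((abs_exp_sub_one_le_exp_abs_sub_one _).trans (by gcongr))
    (gaussWeight_pos σ x).le

end GaussWeight

section Asymptotics

variable {ε : ℝ}

theorem tendsto_sqrt_mul_log_mul_rpow_neg (c : ℝ) (hε : 0 < ε) :
    Tendsto (fun n : ℕ => √(c * Real.log n) * (n : ℝ) ^ (-ε)) atTop (𝓝 0) := by
  have hlog : Tendsto (fun x : ℝ => √(c * (Real.log x / x ^ (2 * ε)))) atTop (𝓝 0) := by
    simpa using
      ((isLittleO_log_rpow_atTop (by positivity)).tendsto_div_nhds_zero.const_mul c).sqrt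
  refine (hlog.comp tendsto_natCast_atTop_atTop).congr' ?_
  filter_upwards [eventually_gt_atTop 0] with n hn
  have hn : (0 : ℝ) < n := Nat.cast_pos.mpr hn
  rw [Function.comp_apply, ← mul_div_assoc, Real.sqrt_div' _ (by positivity), Real.rpow_neg hn.le,
    mul_comm 2 ε, Real.rpow_mul hn.le, Real.rpow_two, Real.sqrt_sq (by positivity), div_eq_mul_inv]

theorem tendsto_mul_of_tendsto_mul_rpow {h r : ℕ → ℝ}
    (hh : Tendsto (fun n : ℕ => h n * (n : ℝ) ^ (-ε)) atTop (𝓝 0))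
    (hr : Tendsto (fun n : ℕ => r n * (n : ℝ) ^ ε) atTop (𝓝 0)) :
    Tendsto (fun n => h n * r n) atTop (𝓝 0) := by
  refine (zero_mul (0 : ℝ) ▸ hh.mul hr).congr' ?_
  filter_upwards [eventually_gt_atTop 0] with n hn
  have hn : (0 : ℝ) < n := Nat.cast_pos.mpr hn
  rw [mul_mul_mul_comm, ← Real.rpow_add hn, neg_add_cancel, Real.rpow_zero, mul_one]

theorem tendsto_gaussShiftBound {d : ℕ} (σ : Fin d → ℝ) (c : ℝ) (hε : 0 < ε)
    {r : ℕ → ℝ} (hr : Tendsto (fun n : ℕ => r n * (n : ℝ) ^ ε) atTop (𝓝 0)) :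
    Tendsto (fun n : ℕ => gaussShiftBound σ √(c * Real.log n) (r n)) atTop (𝓝 0) := by
  have hr₀ : Tendsto r atTop (𝓝 0) := by
    simpa using tendsto_mul_of_tendsto_mul_rpow (h := 1)
      (by simpa [Function.comp_def] using
        (tendsto_rpow_neg_atTop hε).comp tendsto_natCast_atTop_atTop) hr
  have hMr := tendsto_mul_of_tendsto_mul_rpow (tendsto_sqrt_mul_log_mul_rpow_neg c hε) hr
  have hlim := tendsto_finsetSum Finset.univ fun i _ =>
    (((hMr.const_mul (2 * σ i)).add (hr₀.pow 2)).div_const (2 * σ i ^ 2))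
  simp only [mul_zero, add_zero, ne_eq, OfNat.ofNat_ne_zero, not_false_eq_true, zero_pow,
    zero_div, Finset.sum_const_zero] at hlim
  simpa only [gaussShiftBound, mul_assoc] using hlim

end Asymptotics

theorem abs_div_sub_one_le_of_abs_sub_le {a b δ : ℝ} (hb : 0 < b) (h : |a - b| ≤ δ * b) :
    |a / b - 1| ≤ δ := by
  rwa [div_sub_one hb.ne', abs_div, abs_of_pos hb, div_le_iff₀ hb]

theorem bulk_integral_approximation_general
    (d : ℕ) (hd : 0 < d) (σ : Fin d → ℝ) (hσ : ∀ i, 0 < σ i)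
    (p : ℝ≥0∞) (hp : 1 ≤ p)
    (g : ℝ → ℝ) (hg : ContDiffOn ℝ 2 g (Set.Ici 0))
    (c₁ c₂ : ℝ) (hc₁ : 0 < c₁)
    (hgb : ∀ y ∈ Set.Icc (0 : ℝ) 1, c₁ ≤ g y ∧ g y ≤ c₂)
    (ε : ℝ) (hε : 0 < ε)
    (r : ℕ → ℝ) (hr : ∀ n, 0 < r n)
    (hrup : Tendsto (fun n : ℕ => r n * (n : ℝ) ^ ε) atTop (nhds 0))
    (β : ℝ)
    (κ : ℝ) (hκ : 0 < κ) :
    ∀ᶠ n : ℕ in atTop, ∀ x : Fin d → ℝ,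
      (∀ i, |x i| ≤ σ i * Real.sqrt (2 * (1 + β) * Real.log n)) →
      |(∫ y : Fin d → ℝ,
            if lpNormR p (x - y) ≤ r n then
              g (lpNormR p (x - y) / r n) * gaussWeight σ y
            else 0) /
          (mmt d hd p g 0 * r n ^ d * gaussWeight σ x) - 1| ≤ κ := by
  have : Fact (1 ≤ p) := ⟨hp⟩
  have hg_cont : ContinuousOn g (Set.Ici 0) := hg.continuousOn
  have hg_pos : ∀ t ∈ Set.Icc (0 : ℝ) 1, 0 < g t := fun t ht => hc₁.trans_le (hgb t ht).1
  have hG_int := integrable_unitBallKernel (d := d) (p := p) hg_cont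
  have hm₀ := integral_unitBallKernel_pos (d := d) (p := p) hg_cont hg_pos
  have hB := ((Real.continuous_exp.tendsto 0).comp
    (tendsto_gaussShiftBound σ (2 * (1 + β)) hε hrup)).sub_const 1
  rw [Real.exp_zero, sub_self] at hB
  filter_upwards [hB.eventually (eventually_le_nhds hκ)] with n hn x hx
  have hρ := gaussWeight_pos σ x
  have hshift : ∀ u, unitBallKernel p g u ≠ 0 →
      |gaussWeight σ (x - r n • u) - gaussWeight σ x| ≤ κ * gaussWeight σ x := by
    intro u hu
    refine (abs_gaussWeight_sub_sub_le hσ hx ?_).trans (mul_le_mul_of_nonneg_right hn hρ.le)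
    rw [norm_smul, Real.norm_of_nonneg (hr n).le]
    exact mul_le_of_le_one_right (hr n).le
      ((norm_le_lpNormR u).trans (lpNormR_le_one_of_unitBallKernel_ne_zero hu))
  have hest := abs_integral_mul_sub_le hG_int (hG_int.mul_gaussWeight_comp (by fun_prop))
    (unitBallKernel_nonneg fun t ht => (hg_pos t ht).le) hshift
  rw [integral_ite_comp_sub_eq_pow_mul volume (lpNormR p) (hr n) fun u => lpNormR_smul (hr n).le u,
    Module.finrank_fin_fun, mul_right_comm, mul_comm _ (r n ^ d),
    mul_div_mul_left _ _ (pow_pos (hr n) d).ne', mmt_zero_eq_integral_unitBallKernel hd]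
  refine abs_div_sub_one_le_of_abs_sub_le (mul_pos hm₀ hρ) ?_
  exact hest.trans_eq (by ring)

/-- Lemma `interror`: uniformly for `x` in the bulk region `B_1`,
`∫_{‖x-y‖_p ≤ r_n} g(‖x-y‖_p/r_n) ρ(y) dy = m_0 r_n^d ρ(x)(1 + o(1))`. -/
theorem bulk_integral_approximation
    (d : ℕ) (hd : 0 < d) (σ : Fin d → ℝ) (hσ : ∀ i, 0 < σ i)
    (p : ℝ≥0∞) (hp : 1 ≤ p)
    (g : ℝ → ℝ) (hg : ContDiffOn ℝ 2 g (Set.Ici 0))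
    (c₁ c₂ : ℝ) (hc₁ : 0 < c₁)
    (hgb : ∀ y ∈ Set.Icc (0 : ℝ) 1, c₁ ≤ g y ∧ g y ≤ c₂)
    (ε : ℝ) (hε : 0 < ε) (hε' : ε < 1 / (2 * ((d : ℝ) + 4)))
    (r : ℕ → ℝ) (hr : ∀ n, 0 < r n)
    (hrlow : Tendsto (fun n : ℕ => r n * (n : ℝ) ^ ((1 : ℝ) / ((d : ℝ) + 4) - ε)) atTop atTop)
    (hrup : Tendsto (fun n : ℕ => r n * (n : ℝ) ^ ε) atTop (nhds 0))
    (β : ℝ) (hβ : 0 < β)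
    (κ : ℝ) (hκ : 0 < κ) :
    ∀ᶠ n : ℕ in atTop, ∀ x : Fin d → ℝ,
      (∀ i, |x i| ≤ σ i * Real.sqrt (2 * (1 + β) * Real.log n)) →
      |(∫ y : Fin d → ℝ,
            if lpNormR p (x - y) ≤ r n then
              g (lpNormR p (x - y) / r n) * gaussWeight σ y
            else 0) /
          (mmt d hd p g 0 * r n ^ d * gaussWeight σ x) - 1| ≤ κ :=
  bulk_integral_approximation_general d hd σ hσ p hp g hg c₁ c₂ hc₁ hgb ε hε r hr hrup β κ hκ
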